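/- Single-layer version of Corollary 1: let f(p) = w^T ν(W p + b) + c with ReLU ν, where W ∈ ℝ^{m×3} has i.i.d. N(0, 2/m) entries, w = sqrt(π/m)·𝟙, b = -W t̄, c = -r̄. Then as m → ∞, f(p) converges in probability to ‖p - t̄‖ - r̄ for each fixed p. -/

import Mathlib

/-!
Each row feature `Wᵢ · (p - t̄)` is a centred Gaussian of variance `(2/m) ‖p - t̄‖²`, so by
`E[ν(X)] = σ / √(2π)` each neuron `√(π/m) ν(Wᵢ · (p - t̄))` has mean `‖p - t̄‖ / m` and variance at
most `(π/m) (2/m) ‖p - t̄‖²`. Distinct rows are independent, so `f_m + r̄` has mean `‖p - t̄‖` and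
variance `O(1/m)`, and Chebyshev's inequality gives convergence in probability.
-/

open MeasureTheory ProbabilityTheory Filter Real Set
open scoped NNReal Topology

lemma integral_Ioi_mul_exp_neg_mul_sq {b : ℝ} (hb : 0 < b) :
    ∫ x in Ioi (0 : ℝ), x * exp (-b * x ^ 2) = (2 * b)⁻¹ := by
  have hderiv (x : ℝ) : HasDerivAt (fun y ↦ -(2 * b)⁻¹ * exp (-b * y ^ 2))
      (x * exp (-b * x ^ 2)) x := by
    refine (((hasDerivAt_pow 2 x).const_mul (-b)).exp.const_mul _).congr_deriv ?_
    field_simp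
    ring
  have hlim : Tendsto (fun y : ℝ ↦ -(2 * b)⁻¹ * exp (-b * y ^ 2)) atTop (𝓝 (-(2 * b)⁻¹ * 0)) :=
    (tendsto_exp_atBot.comp ((tendsto_pow_atTop two_ne_zero).const_mul_atTop_of_neg
      (neg_lt_zero.2 hb))).const_mul _
  simpa using integral_Ioi_of_hasDerivAt_of_tendsto' (a := 0) (fun x _ ↦ hderiv x)
    (integrable_mul_exp_neg_mul_sq hb).integrableOn hlim

namespace ProbabilityTheory

lemma integral_max_zero_gaussianReal (v : ℝ≥0) :
    ∫ x, max x 0 ∂gaussianReal 0 v = √v / √(2 * π) := by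
  rcases eq_or_ne v 0 with rfl | hv
  · simp [gaussianReal_zero_var]
  have hv' : (0 : ℝ) < v := by positivity
  have hdens : (fun x ↦ gaussianPDFReal 0 v x • max x 0) = (Ioi 0).indicator
      (fun x ↦ (√(2 * π * v))⁻¹ * (x * exp (-(2 * v : ℝ)⁻¹ * x ^ 2))) := by
    ext x
    rcases le_or_gt x 0 with hx | hx
    · simp [hx]
    · rw [indicator_of_mem (mem_Ioi.2 hx), max_eq_left hx.le, gaussianPDFReal, smul_eq_mul]
      ring_nf
  rw [integral_gaussianReal_eq_integral_smul hv, hdens, integral_indicator measurableSet_Ioi,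
    integral_const_mul, integral_Ioi_mul_exp_neg_mul_sq (by positivity),
    sqrt_mul (by positivity)]
  field_simp
  exact (sq_sqrt hv'.le).symm

lemma integral_sq_gaussianReal (v : ℝ≥0) : ∫ x, x ^ 2 ∂gaussianReal 0 v = v := by
  rw [← variance_id_gaussianReal (μ := 0),
    variance_of_integral_eq_zero aemeasurable_id integral_id_gaussianReal]
  rfl

variable {Ω : Type*} {mΩ : MeasurableSpace Ω} {P : Measure Ω}

lemma iIndepFun.hasLaw_sum_gaussianReal {ι : Type*} {X : ι → Ω → ℝ} (hind : iIndepFun X P)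
    {m : ι → ℝ} {v : ι → ℝ≥0} (hX : ∀ i, HasLaw (X i) (gaussianReal (m i) (v i)) P)
    (s : Finset ι) :
    HasLaw (∑ i ∈ s, X i) (gaussianReal (∑ i ∈ s, m i) (∑ i ∈ s, v i)) P := by
  have := hind.isProbabilityMeasure
  classical
  induction s using Finset.induction_on with
  | empty => exact ⟨aemeasurable_const, by simp [Pi.zero_def, gaussianReal_zero_var]⟩
  | insert a s ha ih =>
    simp only [Finset.sum_insert ha]
    rw [← gaussianReal_conv_gaussianReal]
    exact (hind.indepFun_finsetSum_of_notMem₀ (fun i ↦ (hX i).aemeasurable) ha).symm.hasLaw_add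
      (hX a) ih

lemma iIndepFun.hasLaw_sum_mul_gaussianReal {ι : Type*} [Fintype ι] {G : ι → Ω → ℝ}
    (hind : iIndepFun G P) {s : ℝ≥0} (hG : ∀ i, HasLaw (G i) (gaussianReal 0 s) P)
    (u : EuclideanSpace ℝ ι) :
    HasLaw (fun ω ↦ ∑ i, G i ω * u i) (gaussianReal 0 (s * ‖u‖₊ ^ 2)) P := by
  have hind' : iIndepFun (fun i ω ↦ G i ω * u i) P :=
    hind.comp (fun i x ↦ x * u i) fun i ↦ measurable_mul_const _
  have hscaled := hind'.hasLaw_sum_gaussianReal (fun i ↦ gaussianReal_mul_const (hG i) (u i))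
    Finset.univ
  convert hscaled using 2
  · simp [Finset.sum_apply]
  · simp
  · ext
    simp [EuclideanSpace.nnnorm_eq, Finset.mul_sum, mul_comm]

lemma iIndepFun.indepFun_rows {ι κ β : Type*} [Fintype κ] {mβ : MeasurableSpace β}
    {X : ι × κ → Ω → β} (hind : iIndepFun X P) (hX : ∀ ij, AEMeasurable (X ij) P)
    {i k : ι} (hik : i ≠ k) :
    IndepFun (fun ω j ↦ X (i, j) ω) (fun ω j ↦ X (k, j) ω) P := by
  classical
  have hdisj : Disjoint ({i} ×ˢ Finset.univ : Finset (ι × κ)) ({k} ×ˢ Finset.univ) := by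
    simp [Finset.disjoint_left, hik.symm]
  exact (hind.indepFun_finset₀ _ _ hdisj hX).comp
    (φ := fun g j ↦ g ⟨(i, j), by simp⟩) (ψ := fun g j ↦ g ⟨(k, j), by simp⟩)
    (measurable_pi_lambda _ fun _ ↦ measurable_pi_apply _)
    (measurable_pi_lambda _ fun _ ↦ measurable_pi_apply _)

section Relu

variable {X : Ω → ℝ} {v : ℝ≥0}

lemma HasLaw.memLp_two_gaussianReal {m : ℝ} (hX : HasLaw X (gaussianReal m v) P) :
    MemLp X 2 P :=
  (hX.map_eq ▸ memLp_id_gaussianReal 2).comp_of_map hX.aemeasurable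

lemma HasLaw.integral_max_zero_gaussianReal (hX : HasLaw X (gaussianReal 0 v) P) :
    P[fun ω ↦ max (X ω) 0] = √v / √(2 * π) := by
  rw [← ProbabilityTheory.integral_max_zero_gaussianReal, ← hX.integral_comp (by fun_prop)]
  rfl

lemma HasLaw.memLp_max_zero_gaussianReal (hX : HasLaw X (gaussianReal 0 v) P) :
    MemLp (fun ω ↦ max (X ω) 0) 2 P :=
  hX.memLp_two_gaussianReal.pos_part

lemma HasLaw.variance_max_zero_gaussianReal_le (hX : HasLaw X (gaussianReal 0 v) P) :
    Var[fun ω ↦ max (X ω) 0; P] ≤ v := by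
  have := hX.isProbabilityMeasure
  have hXsq : P[X ^ 2] = (v : ℝ) := by
    rw [← integral_sq_gaussianReal, ← hX.integral_comp (by fun_prop)]
    rfl
  calc Var[fun ω ↦ max (X ω) 0; P] ≤ P[(fun ω ↦ max (X ω) 0) ^ 2] :=
        variance_le_expectation_sq hX.memLp_max_zero_gaussianReal.1
    _ ≤ P[X ^ 2] := by
        refine integral_mono hX.memLp_max_zero_gaussianReal.integrable_sq
          hX.memLp_two_gaussianReal.integrable_sq
          fun ω ↦ ?_
        simp only [Pi.pow_apply]
        rcases le_total 0 (X ω) with h | h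
        · rw [max_eq_left h]
        · rw [max_eq_right h]; nlinarith
    _ = v := hXsq

end Relu

section ReluLayer

variable {ι κ : Type*} [Fintype κ] {W : Ω → ι → κ → ℝ} {s : ℝ≥0}

lemma hasLaw_row_gaussianReal (hind : iIndepFun (fun ij : ι × κ ↦ fun ω ↦ W ω ij.1 ij.2) P)
    (hW : ∀ i j, HasLaw (fun ω ↦ W ω i j) (gaussianReal 0 s) P) (u : EuclideanSpace ℝ κ)
    (i : ι) : HasLaw (fun ω ↦ ∑ j, W ω i j * u j) (gaussianReal 0 (s * ‖u‖₊ ^ 2)) P :=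
  (hind.precomp (Prod.mk_right_injective i)).hasLaw_sum_mul_gaussianReal (hW i) u

variable [Fintype ι]

lemma memLp_sum_relu_layer (hind : iIndepFun (fun ij : ι × κ ↦ fun ω ↦ W ω ij.1 ij.2) P)
    (hW : ∀ i j, HasLaw (fun ω ↦ W ω i j) (gaussianReal 0 s) P) (u : EuclideanSpace ℝ κ) (c : ℝ) :
    MemLp (fun ω ↦ ∑ i, c * max (∑ j, W ω i j * u j) 0) 2 P := by
  simpa [← Finset.sum_fn] using memLp_finsetSum' Finset.univ fun i _ ↦
    (hasLaw_row_gaussianReal hind hW u i).memLp_max_zero_gaussianReal.const_mul c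

lemma integral_sum_relu_layer (hind : iIndepFun (fun ij : ι × κ ↦ fun ω ↦ W ω ij.1 ij.2) P)
    (hW : ∀ i j, HasLaw (fun ω ↦ W ω i j) (gaussianReal 0 s) P) (u : EuclideanSpace ℝ κ) (c : ℝ) :
    P[fun ω ↦ ∑ i, c * max (∑ j, W ω i j * u j) 0]
      = Fintype.card ι * c * (√s * ‖u‖) / √(2 * π) := by
  have := hind.isProbabilityMeasure
  rw [integral_finsetSum _ fun i _ ↦
    ((hasLaw_row_gaussianReal hind hW u i).memLp_max_zero_gaussianReal.integrable
      one_le_two).const_mul c]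
  simp_rw [integral_const_mul, (hasLaw_row_gaussianReal hind hW u _).integral_max_zero_gaussianReal]
  have hvar : √((s * ‖u‖₊ ^ 2 : ℝ≥0) : ℝ) = √s * ‖u‖ := by
    push_cast
    rw [sqrt_mul s.coe_nonneg, sqrt_sq (norm_nonneg u)]
  simp only [hvar, Finset.sum_const, Finset.card_univ, nsmul_eq_mul]
  ring

lemma variance_sum_relu_layer_le (hind : iIndepFun (fun ij : ι × κ ↦ fun ω ↦ W ω ij.1 ij.2) P)
    (hW : ∀ i j, HasLaw (fun ω ↦ W ω i j) (gaussianReal 0 s) P) (u : EuclideanSpace ℝ κ) (c : ℝ) :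
    Var[fun ω ↦ ∑ i, c * max (∑ j, W ω i j * u j) 0; P]
      ≤ Fintype.card ι * c ^ 2 * (s * ‖u‖ ^ 2) := by
  have hrow := hasLaw_row_gaussianReal hind hW u
  have hF : Measurable fun g : κ → ℝ ↦ c * max (∑ j, g j * u j) 0 := by fun_prop
  have hindep : Set.Pairwise (Finset.univ : Finset ι)
      fun i k ↦ IndepFun (fun ω ↦ c * max (∑ j, W ω i j * u j) 0)
        (fun ω ↦ c * max (∑ j, W ω k j * u j) 0) P := fun i _ k _ hik ↦
    (hind.indepFun_rows (fun ij ↦ (hW ij.1 ij.2).aemeasurable) hik).comp hF hF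
  have := IndepFun.variance_sum
    (fun i _ ↦ (hrow i).memLp_max_zero_gaussianReal.const_mul c) hindep
  rw [Finset.sum_fn] at this
  rw [this, ← Finset.card_univ, mul_assoc, ← nsmul_eq_mul, ← Finset.sum_const]
  refine Finset.sum_le_sum fun i _ ↦ ?_
  rw [variance_const_mul]
  gcongr
  simpa using (hrow i).variance_max_zero_gaussianReal_le

end ReluLayer

lemma tendsto_measure_abs_sub_ge_of_variance_le [IsFiniteMeasure P] {S : ℕ → Ω → ℝ}
    {a C ε : ℝ} (hε : 0 < ε)
    (hS : ∀ᶠ m in atTop, MemLp (S m) 2 P ∧ P[S m] = a ∧ Var[S m; P] ≤ C / m) :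
    Tendsto (fun m ↦ P {ω | ε ≤ |S m ω - a|}) atTop (𝓝 0) := by
  have hbound : Tendsto (fun m : ℕ ↦ ENNReal.ofReal (C / m / ε ^ 2)) atTop (𝓝 0) := by
    simpa using ENNReal.tendsto_ofReal
      ((tendsto_const_div_atTop_nhds_zero_nat C).div_const (ε ^ 2))
  refine tendsto_of_tendsto_of_tendsto_of_le_of_le' tendsto_const_nhds hbound
    (Eventually.of_forall fun _ ↦ zero_le) ?_
  filter_upwards [hS] with m ⟨hmem, hmean, hvar⟩
  calc P {ω | ε ≤ |S m ω - a|} ≤ ENNReal.ofReal (Var[S m; P] / ε ^ 2) :=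
        hmean ▸ meas_ge_le_variance_div_sq hmem hε
    _ ≤ ENNReal.ofReal (C / m / ε ^ 2) := by gcongr

end ProbabilityTheory

theorem stmt_7_general {Ω : Type*} [MeasureSpace Ω] (μ : Measure Ω) [IsProbabilityMeasure μ]
    (t : EuclideanSpace ℝ (Fin 3)) (r : ℝ)
    (p : EuclideanSpace ℝ (Fin 3))
    (W : (m : ℕ) → Ω → Fin m → Fin 3 → ℝ)
    (hindep : ∀ m : ℕ, 1 ≤ m →
      iIndepFun (fun ij : Fin m × Fin 3 => fun ω => W m ω ij.1 ij.2) μ)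
    (hgauss : ∀ m : ℕ, 1 ≤ m → ∀ (i : Fin m) (j : Fin 3),
      Measure.map (fun ω => W m ω i j) μ = gaussianReal 0 (2 / m : NNReal))
    (f : (m : ℕ) → Ω → ℝ)
    (hf : ∀ m (ω : Ω), f m ω =
      (∑ i : Fin m, Real.sqrt (Real.pi / m) * max (∑ j : Fin 3, W m ω i j * (p j - t j)) 0) - r) :
    ∀ ε > (0 : ℝ), Tendsto (fun m => μ {ω | ε ≤ |f m ω - (‖p - t‖ - r)|})
      atTop (nhds 0) := by
  intro ε hε
  have hlayer (m : ℕ) (hm : 1 ≤ m) :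
      MemLp (fun ω ↦ f m ω + r) 2 μ ∧ μ[fun ω ↦ f m ω + r] = ‖p - t‖ ∧
        Var[fun ω ↦ f m ω + r; μ] ≤ 2 * π * ‖p - t‖ ^ 2 / m := by
    have hfW : (fun ω ↦ f m ω + r)
        = fun ω ↦ ∑ i, √(π / m) * max (∑ j, W m ω i j * (p - t) j) 0 := by
      ext ω
      simp [hf]
    have hW (i j) : HasLaw (fun ω ↦ W m ω i j) (gaussianReal 0 (2 / m)) μ :=
      ⟨.of_map_ne_zero (hgauss m hm i j ▸ IsProbabilityMeasure.ne_zero _), hgauss m hm i j⟩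
    have hm' : (0 : ℝ) < m := by exact_mod_cast hm
    rw [hfW]
    refine ⟨memLp_sum_relu_layer (hindep m hm) hW _ _, ?_, ?_⟩
    · rw [integral_sum_relu_layer (hindep m hm) hW, Fintype.card_fin, NNReal.coe_div, NNReal.coe_natCast, NNReal.coe_ofNat,
        sqrt_div' _ hm'.le, sqrt_div' _ hm'.le, sqrt_mul zero_le_two]
      field_simp
      rw [sq_sqrt hm'.le]
    · refine (variance_sum_relu_layer_le (hindep m hm) hW _ _).trans_eq ?_
      rw [Fintype.card_fin, sq_sqrt (by positivity)]
      push_cast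
      field_simp
  refine (tendsto_measure_abs_sub_ge_of_variance_le hε
    (eventually_atTop.2 ⟨1, hlayer⟩)).congr fun m ↦ ?_
  congr! 4 with ω
  ring_nf

/-- Single-layer version of Corollary 1: with `f_m(p) = Σᵢ √(π/m) · ReLU(Wᵢ·(p - t̄)) - r̄`,
where the `m × 3` matrix `W` has i.i.d. `N(0, 2/m)` entries (this is
`wᵀ ν(W p + b) + c` with `w = √(π/m)·𝟙`, `b = -W t̄`, `c = -r̄`), the output converges in
probability to `‖p - t̄‖ - r̄` as `m → ∞`, for each fixed `p`. -/
theorem stmt_7 {Ω : Type*} [MeasureSpace Ω] (μ : Measure Ω) [IsProbabilityMeasure μ]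
    (t : EuclideanSpace ℝ (Fin 3)) (r : ℝ) (hr : 0 < r)
    (p : EuclideanSpace ℝ (Fin 3))
    (W : (m : ℕ) → Ω → Fin m → Fin 3 → ℝ)
    (hindep : ∀ m : ℕ, 1 ≤ m →
      iIndepFun (fun ij : Fin m × Fin 3 => fun ω => W m ω ij.1 ij.2) μ)
    (hgauss : ∀ m : ℕ, 1 ≤ m → ∀ (i : Fin m) (j : Fin 3),
      Measure.map (fun ω => W m ω i j) μ = gaussianReal 0 (2 / m : NNReal))
    (f : (m : ℕ) → Ω → ℝ)
    (hf : ∀ m (ω : Ω), f m ω =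
      (∑ i : Fin m, Real.sqrt (Real.pi / m) * max (∑ j : Fin 3, W m ω i j * (p j - t j)) 0) - r) :
    ∀ ε > (0 : ℝ), Tendsto (fun m => μ {ω | ε ≤ |f m ω - (‖p - t‖ - r)|})
      atTop (nhds 0) :=
  stmt_7_general μ t r p W hindep hgauss f hf
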